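/- arXiv:0909.4517 — 3 statements merged into one kernel-verified Lean document; each statement's English description precedes it below -/
import Mathlib

section
/- Let b ≥ 4 be an integer and let λ be a real number with 1 < λ < 1.3. Then λ^5 - λ^3 - λ^2 - λ - 1 + λ^{2-b}(λ+1) < 0. -/
/-- For integer `b ≥ 4` and real `1 < λ < 1.3`,
`λ^5 - λ^3 - λ^2 - λ - 1 + λ^{2-b}(λ+1) < 0`. -/
theorem stmt_5 (b : ℤ) (hb : 4 ≤ b) (l : ℝ) (hl : 1 < l) (hl' : l < 1.3) :
    l^5 - l^3 - l^2 - l - 1 + l ^ ((2 : ℤ) - b) * (l + 1) < 0 := by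
  have h0 : (0:ℝ) < l := by linarith
  have h1 : l ^ ((2 : ℤ) - b) ≤ l ^ (0 : ℤ) := zpow_le_zpow_right₀ hl.le (by omega)
  rw [zpow_zero] at h1
  have h2 : l ^ ((2 : ℤ) - b) * (l + 1) ≤ 1 * (l + 1) :=
    mul_le_mul_of_nonneg_right h1 (by linarith)
  have h3 : l^3 < l + 1 := by
    nlinarith [mul_pos (sub_pos.2 hl) (sub_pos.2 hl'), sq_nonneg (l-1),
      sq_nonneg (l-1.3), mul_nonneg (sub_pos.2 hl).le (sub_pos.2 hl').le]
  have h4 : l^5 - l^3 - l^2 < 0 := by nlinarith [sq_nonneg l, pow_pos h0 2]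
  linarith
end

section
/- The largest real root of t^6 - t^4 - t^3 - t^2 + 1 equals the largest real root of t^8 - t^7 - t^4 - t + 1 (both Laurent-cleared forms of LT_{(1,3)} and LT_{(3,4)} respectively); i.e., λ_{(1,3)} = λ_{(3,4)}. -/
/-! The octic factors as `(t^2 - t + 1)` times the sextic, and `t^2 - t + 1` has no real
root, so the two polynomials have the same real roots; the sextic has a root in `[0, 1]`
and finitely many roots, hence a largest one. -/

open Polynomial

theorem Polynomial.exists_isGreatest_setOf_isRoot {R : Type*} [CommRing R] [IsDomain R]
    [LinearOrder R] {p : R[X]} (hp : p ≠ 0) (hroot : ∃ x, p.IsRoot x) :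
    ∃ x, IsGreatest {y | p.IsRoot y} x := by
  obtain ⟨x, hx, hmax⟩ := Set.exists_max_image _ id (finite_setOfPred_isRoot hp) hroot
  exact ⟨x, hx, hmax⟩

theorem Polynomial.exists_isRoot_of_eval_nonneg_of_eval_nonpos {p : ℝ[X]} {a b : ℝ} (hab : a ≤ b)
    (ha : 0 ≤ p.eval a) (hb : p.eval b ≤ 0) : ∃ x, p.IsRoot x := by
  obtain ⟨x, -, hx⟩ := intermediate_value_Icc' hab p.continuous.continuousOn ⟨hb, ha⟩
  exact ⟨x, hx⟩

noncomputable def sextic : ℝ[X] := X ^ 6 - X ^ 4 - X ^ 3 - X ^ 2 + 1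

theorem eval_sextic (y : ℝ) : sextic.eval y = y ^ 6 - y ^ 4 - y ^ 3 - y ^ 2 + 1 := by
  simp [sextic]

theorem sextic_ne_zero : sextic ≠ 0 := by
  intro h
  simpa [eval_sextic] using congrArg (eval 0) h

theorem exists_isRoot_sextic : ∃ x, sextic.IsRoot x :=
  exists_isRoot_of_eval_nonneg_of_eval_nonpos zero_le_one
    (by norm_num [eval_sextic]) (by norm_num [eval_sextic])

theorem octic_eq_zero_iff (y : ℝ) :
    y ^ 8 - y ^ 7 - y ^ 4 - y + 1 = 0 ↔ y ^ 6 - y ^ 4 - y ^ 3 - y ^ 2 + 1 = 0 := by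
  have hfactor : y ^ 8 - y ^ 7 - y ^ 4 - y + 1
      = (y ^ 2 - y + 1) * (y ^ 6 - y ^ 4 - y ^ 3 - y ^ 2 + 1) := by ring
  have hpos : y ^ 2 - y + 1 ≠ 0 := by nlinarith [sq_nonneg (y - 1 / 2)]
  rw [hfactor, mul_eq_zero, or_iff_right hpos]

/-- The largest real root of `t^6 - t^4 - t^3 - t^2 + 1` equals the
largest real root of `t^8 - t^7 - t^4 - t + 1`, i.e. `λ_{(1,3)} = λ_{(3,4)}`. -/
theorem stmt_9 :
    ∃ x : ℝ,
      (x^6 - x^4 - x^3 - x^2 + 1 = 0 ∧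
        ∀ y : ℝ, y^6 - y^4 - y^3 - y^2 + 1 = 0 → y ≤ x) ∧
      (x^8 - x^7 - x^4 - x + 1 = 0 ∧
        ∀ y : ℝ, y^8 - y^7 - y^4 - y + 1 = 0 → y ≤ x) := by
  obtain ⟨x, hx, hmax⟩ := exists_isGreatest_setOf_isRoot sextic_ne_zero exists_isRoot_sextic
  simp only [mem_upperBounds, Set.mem_ofPred_eq, IsRoot.def, eval_sextic] at hx hmax
  exact ⟨x, ⟨hx, hmax⟩, (octic_eq_zero_iff x).2 hx,
    fun y hy ↦ hmax y ((octic_eq_zero_iff y).1 hy)⟩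
end

section
/- For fixed integer a ≥ 1 and n > a, if λ_n > 1 denotes the largest real root of t^{2n} - t^n(1 + t^a + t^{-a}) + 1, then λ_n^n → (3+√5)/2 as n → ∞. -/
open Filter Real Topology

/-- For fixed `a ≥ 1`, if `λ_n > 1` is the largest real root of
`t^{2n} - t^n (1 + t^a + t^{-a}) + 1` for `n > a`, then
`λ_n^n → (3 + √5)/2` as `n → ∞`. -/
theorem stmt_19 (a : ℕ) (ha : 1 ≤ a) (l : ℕ → ℝ)
    (h : ∀ n : ℕ, a < n →
      1 < l n ∧
      (l n) ^ (2*n) - (l n) ^ n * (1 + (l n) ^ a + ((l n) ^ a)⁻¹) + 1 = 0 ∧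
      ∀ y : ℝ, y ^ (2*n) - y ^ n * (1 + y ^ a + (y ^ a)⁻¹) + 1 = 0 → y ≤ l n) :
    Filter.Tendsto (fun n => (l n) ^ n) Filter.atTop
      (nhds ((3 + Real.sqrt 5) / 2)) := by
  set c : ℕ → ℝ := fun n => 1 + (l n)^a + ((l n)^a)⁻¹ with hcdef
  have main : ∀ n, a < n →
      (l n)^n = (c n + Real.sqrt ((c n)^2 - 4))/2 ∧
      1 ≤ (l n)^a ∧
      (l n)^a ≤ ((3:ℝ)^a) ^ ((((n - a : ℕ)):ℝ))⁻¹ := by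
    intro n hn
    obtain ⟨h1, h2, -⟩ := h n hn
    set u := (l n)^n with hu
    set v := (l n)^a with hv
    have hl0 : (0:ℝ) < l n := lt_trans one_pos h1
    have hu1 : 1 < u := one_lt_pow₀ h1 (by omega)
    have hv1 : 1 < v := one_lt_pow₀ h1 (by omega)
    have hu0 : (0:ℝ) < u := lt_trans one_pos hu1
    have hv0 : (0:ℝ) < v := lt_trans one_pos hv1
    have hsq2 : (l n) ^ (2*n) = u^2 := by rw [hu, ← pow_mul]; ring_nf
    have hquad : u^2 - u * c n + 1 = 0 := by
      rw [hcdef]; rw [hsq2] at h2; exact h2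
    have h2u : 0 ≤ 2*u - c n := by nlinarith
    have hsqeq : (c n)^2 - 4 = (2*u - c n)^2 := by linear_combination (-4) * hquad
    refine ⟨?_, le_of_lt hv1, ?_⟩
    · rw [hsqeq, Real.sqrt_sq h2u]; ring
    · -- bound
      have hvinv : v⁻¹ ≤ 1 := by
        rw [inv_le_one_iff₀]; right; exact le_of_lt hv1
      have hcle : c n ≤ 3 * v := by
        show 1 + v + v⁻¹ ≤ 3 * v
        nlinarith
      have huc : u ≤ c n := by nlinarith
      have hle3 : (l n)^(n - a) ≤ 3 := by
        have hsplit : (l n)^(n - a) * v = u := by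
          rw [hv, hu, ← pow_add]; congr 1; omega
        nlinarith
      have hpow : v ^ (n - a) ≤ (3:ℝ)^a := by
        have : v ^ (n-a) = ((l n)^(n-a))^a := by
          rw [hv, ← pow_mul, ← pow_mul, Nat.mul_comm]
        rw [this]
        exact pow_le_pow_left₀ (by positivity) hle3 a
      have hm : (0:ℝ) < ((n - a : ℕ):ℝ) := by
        have : 0 < n - a := by omega
        exact_mod_cast this
      have hveq : v = ((v : ℝ) ^ (n-a)) ^ ((((n - a : ℕ)):ℝ))⁻¹ := by
        rw [← Real.rpow_natCast v (n-a), ← Real.rpow_mul (le_of_lt hv0),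
          mul_inv_cancel₀ hm.ne', Real.rpow_one]
      rw [hveq]
      exact Real.rpow_le_rpow (by positivity) hpow (by positivity)
  -- limit of the bound
  have hBnd : Tendsto (fun n : ℕ => (((3:ℝ)^a) ^ ((((n - a : ℕ)):ℝ))⁻¹)) atTop (nhds 1) := by
    have hexp : Tendsto (fun n : ℕ => ((((n - a : ℕ)):ℝ))⁻¹) atTop (nhds 0) := by
      apply tendsto_inv_atTop_zero.comp
      exact tendsto_natCast_atTop_atTop.comp (tendsto_sub_atTop_nat a)
    have hcont : Tendsto (fun x : ℝ => ((3:ℝ)^a) ^ x) (nhds 0) (nhds 1) := by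
      have := (Real.continuousAt_const_rpow (b := (0:ℝ)) (show ((3:ℝ)^a) ≠ 0 by positivity)).tendsto
      simpa using this
    exact hcont.comp hexp
  -- v n → 1
  have hvT : Tendsto (fun n => (l n)^a) atTop (nhds 1) := by
    apply tendsto_of_tendsto_of_tendsto_of_le_of_le' tendsto_const_nhds hBnd
    · filter_upwards [eventually_gt_atTop a] with n hn using (main n hn).2.1
    · filter_upwards [eventually_gt_atTop a] with n hn using (main n hn).2.2
  have hcT : Tendsto c atTop (nhds 3) := by
    have := (tendsto_const_nhds (x := (1:ℝ)) (f := atTop)).add hvT |>.add (hvT.inv₀ one_ne_zero)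
    norm_num at this
    exact this
  have h5 : Tendsto (fun n => (c n)^2 - 4) atTop (nhds 5) := by
    have := (hcT.pow 2).sub (tendsto_const_nhds (x := (4:ℝ)))
    norm_num at this
    exact this
  have hsqrtT : Tendsto (fun n => Real.sqrt ((c n)^2 - 4)) atTop (nhds (Real.sqrt 5)) :=
    (Real.continuous_sqrt.continuousAt.tendsto).comp h5
  have hfinal : Tendsto (fun n => (c n + Real.sqrt ((c n)^2 - 4))/2) atTop
      (nhds ((3 + Real.sqrt 5)/2)) := (hcT.add hsqrtT).div_const 2
  apply hfinal.congr'
  filter_upwards [eventually_gt_atTop a] with n hn using ((main n hn).1).symm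
end
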